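/- Let 𝔜 be a family of compact metric spaces. Then the following are equivalent: (i) there is a minimal 𝔜-universal metric space belonging to 𝔜; (ii) there is a 𝔜-universal metric space belonging to 𝔜. -/

import Mathlib

universe u v w

open Function Set

/-- `f` is an isometric (distance-preserving) embedding of metric spaces. -/
def IsIsomEmb {X : Type u} {Y : Type v} [MetricSpace X] [MetricSpace Y] (f : X → Y) : Prop :=
  ∀ a b : X, dist (f a) (f b) = dist a b

/-- `X` embeds isometrically into `Y`. -/
def IsomEmbeds (X : Type u) (Y : Type v) [MetricSpace X] [MetricSpace Y] : Prop :=
  ∃ f : X → Y, IsIsomEmb f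

/-- `X` and `Y` are isometric: there is a surjective isometric embedding of `X` onto `Y`. -/
def IsIsometricTo (X : Type u) (Y : Type v) [MetricSpace X] [MetricSpace Y] : Prop :=
  ∃ f : X → Y, IsIsomEmb f ∧ Surjective f

/-- `X` is not shifted: every isometric self-embedding of `X` is surjective. -/
def NotShifted (X : Type u) [MetricSpace X] : Prop :=
  ∀ f : X → X, IsIsomEmb f → Surjective f

/-- `Y` is universal for the family `M` of metric spaces. -/
def UnivFor {ι : Type w} (M : ι → Type u) [∀ i, MetricSpace (M i)]
    (Y : Type v) [MetricSpace Y] : Prop :=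
  ∀ i, IsomEmbeds (M i) Y

/-- `Y` is minimal universal for the family `M` of metric spaces: `Y` is `M`-universal and
every subset of `Y` (with the induced metric) which is `M`-universal equals `Y`. -/
def MinUnivFor {ι : Type w} (M : ι → Type u) [∀ i, MetricSpace (M i)]
    (Y : Type v) [MetricSpace Y] : Prop :=
  UnivFor M Y ∧ ∀ S : Set Y, UnivFor M ↥S → S = Set.univ

/-!
If `y ∉ f X` for an isometric self-embedding `f` of a compact metric space `X`, then `y` has
positive distance `ε` to the compact set `f X`, and the orbit `y, f y, f² y, …` is `ε`-separated
because `d(fⁿ y, fⁿ⁺ᵏ⁺¹ y) = d(y, f (fᵏ y))`; compactness rules out such a sequence. So such `f`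
is onto. If a compact `Y` in the family is universal and `S ⊆ Y` is universal, embedding `Y` into
`S` gives an isometric self-embedding of `Y` with image in `S`, hence `S = Y`.
-/

theorem Isometry.iterate {α : Type u} [PseudoEMetricSpace α] {f : α → α} (hf : Isometry f) :
    ∀ n, Isometry f^[n]
  | 0 => isometry_id
  | n + 1 => (hf.iterate n).comp hf

theorem Isometry.surjective_of_compactSpace {X : Type u} [MetricSpace X] [CompactSpace X]
    {f : X → X} (hf : Isometry f) : Surjective f := by
  intro y
  by_contra hy
  have hclosed : IsClosed (range f) := (isCompact_range hf.continuous).isClosed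
  have hε : 0 < Metric.infDist y (range f) :=
    (hclosed.notMem_iff_infDist_pos ⟨f y, mem_range_self y⟩).1 hy
  have hsep : ∀ n k, Metric.infDist y (range f) ≤ dist (f^[n] y) (f^[n + (k + 1)] y) := by
    intro n k
    calc Metric.infDist y (range f)
        ≤ dist y (f^[k + 1] y) :=
          Metric.infDist_le_dist_of_mem ⟨f^[k] y, (iterate_succ_apply' f k y).symm⟩
      _ = dist (f^[n] y) (f^[n + (k + 1)] y) := by
          rw [iterate_add_apply f n, (hf.iterate n).dist_eq]
  obtain ⟨x, -, φ, hφ, hlim⟩ := isCompact_univ.tendsto_subseq fun n => mem_univ (f^[n] y)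
  obtain ⟨N, hN⟩ := Metric.cauchySeq_iff'.1 hlim.cauchySeq _ hε
  obtain ⟨k, hk⟩ := Nat.exists_eq_add_of_lt (hφ (Nat.lt_succ_self N))
  have hclose := hN (N + 1) N.le_succ
  rw [dist_comm, comp_apply, comp_apply, hk] at hclose
  exact (hsep (φ N) k).not_gt hclose

theorem eq_univ_of_isomEmbeds {Y : Type u} [MetricSpace Y] [CompactSpace Y] {S : Set Y}
    (h : IsomEmbeds Y S) : S = univ := by
  obtain ⟨f, hf⟩ := h
  have hiso : Isometry (Subtype.val ∘ f) := Isometry.of_dist_eq hf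
  refine eq_univ_of_forall fun y => ?_
  obtain ⟨x, rfl⟩ := hiso.surjective_of_compactSpace y
  exact (f x).2

theorem minUnivFor_of_univFor {ι : Type w} {M : ι → Type u} [∀ i, MetricSpace (M i)] {i : ι}
    [CompactSpace (M i)] (hi : UnivFor M (M i)) : MinUnivFor M (M i) :=
  ⟨hi, fun _ hS => eq_univ_of_isomEmbeds (hS i)⟩

theorem statement4 {ι : Type w} (M : ι → Type u) [∀ i, MetricSpace (M i)]
    [∀ i, CompactSpace (M i)] :
    (∃ i, MinUnivFor M (M i)) ↔ (∃ i, UnivFor M (M i)) :=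
  ⟨fun ⟨i, hi⟩ => ⟨i, hi.1⟩, fun ⟨i, hi⟩ => ⟨i, minUnivFor_of_univFor hi⟩⟩
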